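/- Let q, β > 0, n ∈ ℕ, and s ∈ ℕ. If f ∈ C^s(ℝ) with f^{(k)} bounded for k = 0,…,s, then B_n(f) is s-times differentiable and (B_n(f))^{(s)}(x) = B_n(f^{(s)})(x) for all x ∈ ℝ. -/

import Mathlib

/-!
Differentiating under the integral sign is legitimate as soon as the kernel is integrable and the
derivatives of `f` are bounded, since then `|f⁽ᵏ⁾(x - h/n) Ψ(h)| ≤ Mₖ |Ψ(h)|` is an integrable
majorant uniform in `x`; induction on `s` then gives `(B_n f)⁽ˢ⁾ = B_n (f⁽ˢ⁾)`. The kernel `Ψ` is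
integrable because `1 - ν_q(x) ∈ [0, 2q e^{-βx}]`, so `G_q` decays like `e^{-βx}` at `+∞`, and the
symmetrisation `q ↔ 1/q` makes `Ψ` even (`G_{1/q}(x) = G_q(-x)`), which settles `-∞`.
-/

open MeasureTheory Filter Real

noncomputable def nu (q β x : ℝ) : ℝ :=
  (1 - q * Real.exp (-β * x)) / (1 + q * Real.exp (-β * x))

noncomputable def G (q β x : ℝ) : ℝ := (1/4) * (nu q β (x+1) - nu q β (x-1))

noncomputable def Psi (q β x : ℝ) : ℝ := (G q β x + G (1/q) β x) / 2

noncomputable def B (q β : ℝ) (n : ℕ) (f : ℝ → ℝ) (x : ℝ) : ℝ :=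
  ∫ h : ℝ, f (x - h / n) * Psi q β h

section TranslatedIntegral

variable {α : Type*} [MeasurableSpace α] {μ : Measure α} {g K : α → ℝ} {f : ℝ → ℝ} {M : ℝ}

lemma norm_mul_le_of_abs_le (hM : ∀ y, |f y| ≤ M) (y : ℝ) (k : ℝ) : ‖f y * k‖ ≤ M * ‖k‖ := by
  rw [norm_mul]
  exact mul_le_mul_of_nonneg_right (hM y) (norm_nonneg k)

lemma integrable_comp_sub_mul (hf : Measurable f) (hM : ∀ y, |f y| ≤ M) (hg : Measurable g)
    (hK : Integrable K μ) (x : ℝ) : Integrable (fun h ↦ f (x - g h) * K h) μ :=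
  hK.bdd_mul (hf.comp (measurable_const.sub hg)).aestronglyMeasurable (ae_of_all _ fun _ ↦ hM _)

lemma continuous_integral_comp_sub_mul (hf : Continuous f) (hM : ∀ y, |f y| ≤ M)
    (hg : Measurable g) (hK : Integrable K μ) :
    Continuous fun x ↦ ∫ h, f (x - g h) * K h ∂μ :=
  continuous_of_dominated
    (fun x ↦ (integrable_comp_sub_mul hf.measurable hM hg hK x).aestronglyMeasurable)
    (fun _ ↦ ae_of_all _ fun _ ↦ norm_mul_le_of_abs_le hM _ _) (hK.norm.const_mul M)
    (ae_of_all _ fun _ ↦ by fun_prop)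

lemma hasDerivAt_integral_comp_sub_mul (hf : Differentiable ℝ f) (hM : ∀ y, |f y| ≤ M)
    {M' : ℝ} (hM' : ∀ y, |deriv f y| ≤ M') (hg : Measurable g) (hK : Integrable K μ) (x : ℝ) :
    HasDerivAt (fun x ↦ ∫ h, f (x - g h) * K h ∂μ) (∫ h, deriv f (x - g h) * K h ∂μ) x := by
  have hF := integrable_comp_sub_mul hf.continuous.measurable hM hg hK
  have hF' := integrable_comp_sub_mul (measurable_deriv f) hM' hg hK
  refine (hasDerivAt_integral_of_dominated_loc_of_deriv_le
    (F' := fun y h ↦ deriv f (y - g h) * K h) (bound := fun h ↦ M' * ‖K h‖) univ_mem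
    (Eventually.of_forall fun y ↦ (hF y).aestronglyMeasurable) (hF x) (hF' x).aestronglyMeasurable
    (ae_of_all _ fun _ _ _ ↦ norm_mul_le_of_abs_le hM' _ _) (hK.norm.const_mul M')
    (ae_of_all _ fun h y _ ↦ ?_)).2
  simpa using ((hf _).hasDerivAt.comp y ((hasDerivAt_id y).sub_const (g h))).mul_const (K h)

lemma contDiff_and_iteratedDeriv_integral_comp_sub_mul (s : ℕ) (hf : ContDiff ℝ s f)
    (hfb : ∀ k ≤ s, ∃ M : ℝ, ∀ y, |iteratedDeriv k f y| ≤ M) (hg : Measurable g)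
    (hK : Integrable K μ) :
    ContDiff ℝ s (fun x ↦ ∫ h, f (x - g h) * K h ∂μ) ∧
      iteratedDeriv s (fun x ↦ ∫ h, f (x - g h) * K h ∂μ) =
        fun x ↦ ∫ h, iteratedDeriv s f (x - g h) * K h ∂μ := by
  induction s generalizing f with
  | zero =>
    obtain ⟨M, hM⟩ := hfb 0 le_rfl
    simp only [iteratedDeriv_zero] at hM
    exact ⟨contDiff_zero.2 (continuous_integral_comp_sub_mul (contDiff_zero.1 hf) hM hg hK),
      by simp⟩
  | succ s ih =>
    rw [Nat.cast_succ] at hf ⊢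
    obtain ⟨hf_diff, -, hf'⟩ := contDiff_succ_iff_deriv.1 hf
    obtain ⟨M, hM⟩ := hfb 0 (Nat.zero_le _)
    obtain ⟨M', hM'⟩ := hfb 1 (by omega)
    simp only [iteratedDeriv_zero, iteratedDeriv_one] at hM hM'
    have hderiv := fun x ↦ hasDerivAt_integral_comp_sub_mul hf_diff hM hM' hg hK x
    have hfb' : ∀ k ≤ s, ∃ M : ℝ, ∀ y, |iteratedDeriv k (deriv f) y| ≤ M := fun k hk ↦ by
      simpa only [iteratedDeriv_succ'] using hfb (k + 1) (by omega)
    obtain ⟨ih_cont, ih_eq⟩ := ih hf' hfb'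
    rw [← funext fun x ↦ (hderiv x).deriv] at ih_cont ih_eq
    exact ⟨contDiff_succ_iff_deriv.2 ⟨fun x ↦ (hderiv x).differentiableAt, by simp, ih_cont⟩,
      by rw [iteratedDeriv_succ', ih_eq, iteratedDeriv_succ']⟩

end TranslatedIntegral

section Kernel

variable {q : ℝ} (β : ℝ)

lemma continuous_nu (hq : 0 < q) : Continuous (nu q β) :=
  Continuous.div (by fun_prop) (by fun_prop) fun x ↦ by positivity

lemma continuous_Psi (hq : 0 < q) : Continuous (Psi q β) := by
  have := continuous_nu β hq
  have := continuous_nu β (one_div_pos.2 hq)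
  unfold Psi G
  fun_prop

lemma one_sub_nu (hq : 0 < q) (x : ℝ) :
    1 - nu q β x = 2 * (q * exp (-β * x)) / (1 + q * exp (-β * x)) := by
  have : 0 < 1 + q * exp (-β * x) := by positivity
  unfold nu
  field_simp
  ring

lemma one_sub_nu_mem_Icc (hq : 0 < q) (x : ℝ) :
    1 - nu q β x ∈ Set.Icc 0 (2 * q * exp (-β * x)) := by
  rw [one_sub_nu β hq, mul_assoc]
  have : 0 < q * exp (-β * x) := by positivity
  exact ⟨by positivity, div_le_self (by positivity) (by linarith)⟩

lemma abs_G_le (hq : 0 < q) (x : ℝ) : |G q β x| ≤ q * cosh β * exp (-β * x) := by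
  obtain ⟨hp, hp'⟩ := one_sub_nu_mem_Icc β hq (x + 1)
  obtain ⟨hm, hm'⟩ := one_sub_nu_mem_Icc β hq (x - 1)
  have ep : exp (-β * (x + 1)) = exp (-β) * exp (-β * x) := by rw [← exp_add]; ring_nf
  have em : exp (-β * (x - 1)) = exp β * exp (-β * x) := by rw [← exp_add]; ring_nf
  rw [cosh_eq, G, abs_le]
  constructor <;> nlinarith [exp_pos (-β * x)]

lemma G_isBigO (hq : 0 < q) : G q β =O[atTop] fun x ↦ exp (-β * x) :=
  Asymptotics.IsBigO.of_bound (q * cosh β) (Eventually.of_forall fun x ↦ by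
    simpa [abs_of_pos (exp_pos _), mul_assoc] using abs_G_le β hq x)

lemma nu_one_div (hq : 0 < q) (x : ℝ) : nu (1 / q) β x = -nu q β (-x) := by
  have : 0 < exp (β * x) := exp_pos _
  rw [nu, nu, neg_mul_neg, neg_mul, exp_neg]
  field_simp
  ring

lemma G_one_div (hq : 0 < q) (x : ℝ) : G (1 / q) β x = G q β (-x) := by
  simp only [G, nu_one_div β hq]
  ring_nf

lemma Psi_neg (hq : 0 < q) (x : ℝ) : Psi q β (-x) = Psi q β x := by
  rw [Psi, Psi, G_one_div β hq x, G_one_div β hq (-x), neg_neg, add_comm]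

lemma Psi_isBigO (hq : 0 < q) : Psi q β =O[atTop] fun x ↦ exp (-β * x) :=
  (((G_isBigO β hq).add (G_isBigO β (one_div_pos.2 hq))).const_mul_left (1 / 2)).congr_left
    fun x ↦ by rw [Psi]; ring

lemma integrable_Psi (hq : 0 < q) (hβ : 0 < β) : Integrable (Psi q β) :=
  (continuous_Psi β hq).locallyIntegrable.integrable_of_isBigO_atTop_of_norm_isNegInvariant
    (ae_of_all _ fun x ↦ by simp [Psi_neg β hq]) (Psi_isBigO β hq)
    ⟨Set.Ioi 0, Ioi_mem_atTop 0, exp_neg_integrableOn_Ioi 0 hβ⟩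

end Kernel

theorem B_iterated_deriv (q β : ℝ) (hq : 0 < q) (hβ : 0 < β) (n : ℕ) (s : ℕ)
    (f : ℝ → ℝ) (hf : ContDiff ℝ s f)
    (hfb : ∀ k ≤ s, ∃ M : ℝ, ∀ x : ℝ, |iteratedDeriv k f x| ≤ M) :
    ContDiff ℝ s (B q β n f) ∧
    ∀ x : ℝ, iteratedDeriv s (B q β n f) x = B q β n (iteratedDeriv s f) x := by
  obtain ⟨hcont, hderiv⟩ := contDiff_and_iteratedDeriv_integral_comp_sub_mul s hf hfb
    (g := fun h : ℝ ↦ h / n) (by fun_prop) (integrable_Psi β hq hβ)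
  exact ⟨hcont, congrFun hderiv⟩
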